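/- arXiv:1810.08591 — 3 statements merged into one kernel-verified Lean document; each statement's English description precedes it below -/
import Mathlib

section
/- In the over-parameterized setting (N > m), the gradient-descent solution θ̂ = P_⊥(θ₀) + Σ⁺XᵀY with Gaussian initialization θ₀ ∼ N(0, (1/N)I) yields, for fixed x, Var(h(x)) = (1/N)‖P_⊥(x)‖² + σ² Tr(xxᵀΣ⁺), where P_⊥ is orthogonal projection onto the null space of X, Σ = XᵀX, and Σ⁺ is the Moore–Penrose pseudoinverse. -/
/-!
Write `M = Σ⁺Xᵀ`. Since `P` is symmetric, `h(x) = (Px)·θ₀ + (xᵀM)·ε + const`, and the two random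
terms are independent, so their variances add. Each of `θ₀` and `ε` has scalar covariance
(`1/N` and `σ²`), so the variances are `(1/N)‖Px‖²` and `σ²‖xᵀM‖² = σ² Tr(xxᵀ M Mᵀ)`.
Finally `M Mᵀ = Σ⁺ Σ Σ⁺ᵀ = Σ⁺`, because a Moore–Penrose inverse of a symmetric matrix is
symmetric: its transpose satisfies the same four Penrose equations, and these determine it uniquely.
-/

open MeasureTheory ProbabilityTheory Matrix
open scoped NNReal

namespace Matrix

variable {R : Type*} [CommRing R] {m n : Type*} [Fintype m] [Fintype n]

theorem eq_of_penrose {A : Matrix m n R} {B C : Matrix n m R}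
    (hB₁ : A * B * A = A) (hB₂ : B * A * B = B) (hB₃ : (A * B).IsSymm) (hB₄ : (B * A).IsSymm)
    (hC₁ : A * C * A = A) (hC₂ : C * A * C = C) (hC₃ : (A * C).IsSymm) (hC₄ : (C * A).IsSymm) :
    B = C := by
  have hB : B = B * A * C :=
    calc B = B * (A * B)ᵀ := by rw [hB₃.eq, ← Matrix.mul_assoc, hB₂]
      _ = B * (A * C * A * B)ᵀ := by rw [hC₁]
      _ = B * ((A * B)ᵀ * (A * C)ᵀ) := by simp only [transpose_mul, Matrix.mul_assoc]
      _ = B * A * C := by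
        rw [hB₃.eq, hC₃.eq, ← Matrix.mul_assoc, ← Matrix.mul_assoc B A B, hB₂, Matrix.mul_assoc]
  have hC : C = B * A * C :=
    calc C = (C * A)ᵀ * C := by rw [hC₄.eq, hC₂]
      _ = (C * (A * B * A))ᵀ * C := by rw [hB₁]
      _ = (B * A)ᵀ * (C * A)ᵀ * C := by simp only [transpose_mul, Matrix.mul_assoc]
      _ = B * A * C := by rw [hB₄.eq, hC₄.eq, Matrix.mul_assoc (B * A), hC₂]
  rw [hB, ← hC]

theorem IsSymm.isSymm_of_penrose {A B : Matrix n n R} (hA : A.IsSymm)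
    (h₁ : A * B * A = A) (h₂ : B * A * B = B) (h₃ : (A * B).IsSymm) (h₄ : (B * A).IsSymm) :
    B.IsSymm := by
  refine eq_of_penrose (A := A) ?_ ?_ ?_ ?_ h₁ h₂ h₃ h₄
  · simpa only [transpose_mul, Matrix.mul_assoc, hA.eq] using congrArg (·ᵀ) h₁
  · simpa only [transpose_mul, Matrix.mul_assoc, hA.eq] using congrArg (·ᵀ) h₂
  · simpa only [IsSymm, transpose_mul, transpose_transpose, hA.eq] using h₄.eq.symm
  · simpa only [IsSymm, transpose_mul, transpose_transpose, hA.eq] using h₃.eq.symm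

theorem dotProduct_vecMul_self_eq_trace (x : m → R) (M : Matrix m n R) :
    (x ᵥ* M) ⬝ᵥ (x ᵥ* M) = trace (vecMulVec x x * (M * Mᵀ)) := by
  rw [vecMulVec_mul, trace_vecMulVec, ← vecMul_vecMul, dotProduct_comm x,
    ← dotProduct_mulVec (x ᵥ* M), mulVec_transpose]

end Matrix

namespace ProbabilityTheory

variable {Ω ι : Type*} [MeasurableSpace Ω] {μ : Measure Ω}

lemma covariance_eq_ite_of_iIndepFun [DecidableEq ι] {Y : ι → Ω → ℝ}
    (hY : ∀ i, MemLp (Y i) 2 μ) (hindep : iIndepFun Y μ) {v : ℝ} (hvar : ∀ i, Var[Y i; μ] = v)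
    (i j : ι) : cov[Y i, Y j; μ] = if i = j then v else 0 := by
  split_ifs with hij
  · rw [hij, covariance_self (hY j).aemeasurable, hvar]
  · exact (hindep.indepFun hij).covariance_eq_zero (hY i) (hY j)

variable [Fintype ι]

lemma memLp_dotProduct {p : ENNReal} {Z : Ω → ι → ℝ} (hZ : ∀ i, MemLp (fun ω ↦ Z ω i) p μ)
    (a : ι → ℝ) : MemLp (fun ω ↦ a ⬝ᵥ Z ω) p μ :=
  memLp_finsetSum Finset.univ fun i _ ↦ (hZ i).const_mul (a i)

lemma variance_dotProduct_of_covariance_eq_ite [IsFiniteMeasure μ] [DecidableEq ι]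
    {Z : Ω → ι → ℝ} (hZ : ∀ i, MemLp (fun ω ↦ Z ω i) 2 μ) {v : ℝ}
    (hcov : ∀ i j, cov[fun ω ↦ Z ω i, fun ω ↦ Z ω j; μ] = if i = j then v else 0)
    (a : ι → ℝ) : Var[fun ω ↦ a ⬝ᵥ Z ω; μ] = v * (a ⬝ᵥ a) := by
  change Var[fun ω ↦ ∑ i, a i * Z ω i; μ] = _
  rw [variance_fun_sum fun i ↦ (hZ i).const_mul (a i)]
  simp only [covariance_const_mul_left, covariance_const_mul_right, hcov, mul_ite, mul_zero,
    Finset.sum_ite_eq, Finset.mem_univ, if_true, dotProduct, Finset.mul_sum]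
  exact Finset.sum_congr rfl fun i _ ↦ by ring

lemma variance_dotProduct_add_dotProduct_add_const [IsProbabilityMeasure μ] [DecidableEq ι]
    {κ : Type*} [Fintype κ] [DecidableEq κ] {Z : Ω → ι → ℝ} {W : Ω → κ → ℝ}
    (hZ : ∀ i, MemLp (fun ω ↦ Z ω i) 2 μ) (hW : ∀ k, MemLp (fun ω ↦ W ω k) 2 μ) {v w : ℝ}
    (hZcov : ∀ i j, cov[fun ω ↦ Z ω i, fun ω ↦ Z ω j; μ] = if i = j then v else 0)
    (hWcov : ∀ k l, cov[fun ω ↦ W ω k, fun ω ↦ W ω l; μ] = if k = l then w else 0)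
    (hindep : IndepFun Z W μ) (a : ι → ℝ) (b : κ → ℝ) (c : ℝ) :
    Var[fun ω ↦ a ⬝ᵥ Z ω + b ⬝ᵥ W ω + c; μ] = v * (a ⬝ᵥ a) + w * (b ⬝ᵥ b) := by
  have haZ := memLp_dotProduct hZ a
  have hbW := memLp_dotProduct hW b
  have hindep' : IndepFun (fun ω ↦ a ⬝ᵥ Z ω) (fun ω ↦ b ⬝ᵥ W ω) μ :=
    hindep.comp (φ := (a ⬝ᵥ ·)) (ψ := (b ⬝ᵥ ·)) (by fun_prop) (by fun_prop)
  rw [variance_add_const (X := fun ω ↦ a ⬝ᵥ Z ω + b ⬝ᵥ W ω) (haZ.add hbW).aestronglyMeasurable,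
    hindep'.variance_fun_add haZ hbW, variance_dotProduct_of_covariance_eq_ite hZ hZcov,
    variance_dotProduct_of_covariance_eq_ite hW hWcov]

end ProbabilityTheory

theorem stmt4_general {Ω : Type*} [MeasurableSpace Ω] (μ : Measure Ω) [IsProbabilityMeasure μ]
    {m N : ℕ} (X : Matrix (Fin m) (Fin N) ℝ)
    (Splus : Matrix (Fin N) (Fin N) ℝ)
    -- Moore-Penrose pseudoinverse conditions for `Σ = XᵀX`
    (hS1 : (Xᵀ * X) * Splus * (Xᵀ * X) = Xᵀ * X)
    (hS2 : Splus * (Xᵀ * X) * Splus = Splus)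
    (hS3 : ((Xᵀ * X) * Splus).IsSymm)
    (hS4 : (Splus * (Xᵀ * X)).IsSymm)
    -- `P` is the orthogonal projection onto the null space of `X`
    (P : Matrix (Fin N) (Fin N) ℝ)
    (hPsymm : P.IsSymm)
    (θstar : Fin N → ℝ) (ε : Ω → Fin m → ℝ) (σ : ℝ)
    (hεL2 : ∀ i, MemLp (fun ω => ε ω i) 2 μ)
    (hεmean : ∀ i, ∫ ω, ε ω i ∂μ = 0)
    (hεcov : ∀ i j, ∫ ω, ε ω i * ε ω j ∂μ = if i = j then σ ^ 2 else 0)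
    -- Gaussian initialization `θ₀ ∼ N(0, (1/N) I_N)`, independent of `ε`
    (θ₀ : Ω → Fin N → ℝ) (hθmeas : Measurable θ₀)
    (hgauss : ∀ i, μ.map (fun ω => θ₀ ω i) = gaussianReal 0 ((N : ℝ≥0))⁻¹)
    (hiid : iIndepFun (fun i ω => θ₀ ω i) μ)
    (hindep : IndepFun θ₀ ε μ)
    (x : Fin N → ℝ) :
    variance (fun ω =>
        x ⬝ᵥ (P *ᵥ θ₀ ω + (Splus * Xᵀ) *ᵥ (X *ᵥ θstar + ε ω))) μ
      = (1 / N) * ((P *ᵥ x) ⬝ᵥ (P *ᵥ x))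
        + σ ^ 2 * Matrix.trace (vecMulVec x x * Splus) := by
  have hθlaw (i : Fin N) : HasLaw (fun ω ↦ θ₀ ω i) (gaussianReal 0 (N : ℝ≥0)⁻¹) μ :=
    ⟨by fun_prop, hgauss i⟩
  have hθL2 (i : Fin N) : MemLp (fun ω ↦ θ₀ ω i) 2 μ := (hθlaw i).hasGaussianLaw.memLp_two
  have hθcov := covariance_eq_ite_of_iIndepFun hθL2 hiid (v := (N : ℝ)⁻¹) fun i ↦ by
    rw [(hθlaw i).variance_eq, variance_id_gaussianReal, NNReal.coe_inv, NNReal.coe_natCast]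
  have hεcov' (i j : Fin m) :
      cov[fun ω ↦ ε ω i, fun ω ↦ ε ω j; μ] = if i = j then σ ^ 2 else 0 := by
    rw [covariance_eq_sub (hεL2 i) (hεL2 j), Pi.mul_def, hεcov, hεmean, zero_mul, sub_zero]
  have hS : Splus.IsSymm := by
    refine IsSymm.isSymm_of_penrose ?_ hS1 hS2 hS3 hS4
    rw [IsSymm, transpose_mul, transpose_transpose]
  have hPx : x ᵥ* P = P *ᵥ x := by simpa only [hPsymm.eq] using vecMul_transpose P x
  have hdecomp : (fun ω ↦ x ⬝ᵥ (P *ᵥ θ₀ ω + (Splus * Xᵀ) *ᵥ (X *ᵥ θstar + ε ω)))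
      = fun ω ↦ (P *ᵥ x) ⬝ᵥ θ₀ ω + (x ᵥ* (Splus * Xᵀ)) ⬝ᵥ ε ω
          + x ⬝ᵥ ((Splus * Xᵀ) *ᵥ (X *ᵥ θstar)) := by
    ext ω
    simp only [mulVec_add, dotProduct_add, dotProduct_mulVec, hPx]
    ring
  have hMMt : Splus * Xᵀ * (Splus * Xᵀ)ᵀ = Splus := by
    simpa only [transpose_mul, transpose_transpose, hS.eq, Matrix.mul_assoc] using hS2
  rw [hdecomp, variance_dotProduct_add_dotProduct_add_const hθL2 hεL2 hθcov hεcov' hindep,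
    dotProduct_vecMul_self_eq_trace, hMMt, one_div]

/-- Variance of the over-parameterized gradient-descent linear predictor
`h(x) = xᵀθ̂`, `θ̂ = P⊥θ₀ + Σ⁺XᵀY`, with `θ₀ ∼ N(0, (1/N)I)` independent of the noise:
`Var(h(x)) = (1/N)‖P⊥x‖² + σ² Tr(xxᵀΣ⁺)`. -/
theorem stmt4 {Ω : Type*} [MeasurableSpace Ω] (μ : Measure Ω) [IsProbabilityMeasure μ]
    {m N : ℕ} (hN : 0 < N) (hmN : m < N) (X : Matrix (Fin m) (Fin N) ℝ)
    (Splus : Matrix (Fin N) (Fin N) ℝ)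
    -- Moore-Penrose pseudoinverse conditions for `Σ = XᵀX`
    (hS1 : (Xᵀ * X) * Splus * (Xᵀ * X) = Xᵀ * X)
    (hS2 : Splus * (Xᵀ * X) * Splus = Splus)
    (hS3 : ((Xᵀ * X) * Splus).IsSymm)
    (hS4 : (Splus * (Xᵀ * X)).IsSymm)
    -- `P` is the orthogonal projection onto the null space of `X`
    (P : Matrix (Fin N) (Fin N) ℝ)
    (hPsymm : P.IsSymm) (hPidem : P * P = P)
    (hXP : X * P = 0) (hPnull : ∀ v, X *ᵥ v = 0 → P *ᵥ v = v)
    (θstar : Fin N → ℝ) (ε : Ω → Fin m → ℝ) (σ : ℝ)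
    (hεmeas : Measurable ε)
    (hεL2 : ∀ i, MemLp (fun ω => ε ω i) 2 μ)
    (hεmean : ∀ i, ∫ ω, ε ω i ∂μ = 0)
    (hεcov : ∀ i j, ∫ ω, ε ω i * ε ω j ∂μ = if i = j then σ ^ 2 else 0)
    -- Gaussian initialization `θ₀ ∼ N(0, (1/N) I_N)`, independent of `ε`
    (θ₀ : Ω → Fin N → ℝ) (hθmeas : Measurable θ₀)
    (hgauss : ∀ i, μ.map (fun ω => θ₀ ω i) = gaussianReal 0 ((N : ℝ≥0))⁻¹)
    (hiid : iIndepFun (fun i ω => θ₀ ω i) μ)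
    (hindep : IndepFun θ₀ ε μ)
    (x : Fin N → ℝ) :
    variance (fun ω =>
        x ⬝ᵥ (P *ᵥ θ₀ ω + (Splus * Xᵀ) *ᵥ (X *ᵥ θstar + ε ω))) μ
      = (1 / N) * ((P *ᵥ x) ⬝ᵥ (P *ᵥ x))
        + σ ^ 2 * Matrix.trace (vecMulVec x x * Splus) :=
  stmt4_general μ X Splus hS1 hS2 hS3 hS4 P hPsymm θstar ε σ hεL2 hεmean hεcov θ₀ hθmeas hgauss hiid
    hindep x
end

section
/- In the over-parameterized setting, the variance averaged over the empirical distribution of training inputs equals (r/m)σ², where r = rank(X): (1/m)Σᵢ Var(h(xᵢ)) = σ² r / m. In particular the variance scales with the rank of the data, not the number of parameters N. -/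
open MeasureTheory ProbabilityTheory Matrix
open scoped NNReal

/-!
Because `X * P = 0`, the random initialisation `P θ₀` is invisible at the training inputs, and
the predictions there are `H (X θ* + ε)` with the hat matrix `H = X S Xᵀ`. The identity
`XᵀX S XᵀX = XᵀX` makes `H` a symmetric idempotent with `H X = X`, i.e. the orthogonal projection
onto the column space of `X`. Hence `Var h(xᵢ) = σ² ∑ⱼ Hᵢⱼ² = σ² Hᵢᵢ`, and summing over `i` gives
`σ² tr H = σ² rank H = σ² rank X`.
-/

namespace Matrix

theorem trace_eq_rank_of_isIdempotentElem {K n : Type*} [Field K] [Fintype n] [DecidableEq n]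
    {M : Matrix n n K} (hM : IsIdempotentElem M) : M.trace = M.rank := by
  have hproj : IsIdempotentElem M.mulVecLin := by
    rw [IsIdempotentElem, Module.End.mul_eq_comp, ← mulVecLin_mul, hM.eq]
  rw [rank, ← (LinearMap.IsIdempotentElem.isProj_range _ hproj).trace, ← Matrix.toLin'_apply',
    Matrix.trace_toLin'_eq]

theorem sum_sq_eq_diag_of_isSymm {R n : Type*} [CommSemiring R] [Fintype n] {A : Matrix n n R}
    (hA : A.IsSymm) (hAA : IsIdempotentElem A) (i : n) : ∑ j, A i j ^ 2 = A i i := by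
  conv_rhs => rw [← hAA.eq, mul_apply]
  refine Finset.sum_congr rfl fun j _ => ?_
  rw [sq, hA.apply i j]

end Matrix

def hatMatrix {m n : Type*} [Fintype n] (X : Matrix m n ℝ) (S : Matrix n n ℝ) : Matrix m m ℝ :=
  X * S * Xᵀ

section HatMatrix

variable {m n : Type*} [Fintype m] [Fintype n] {X : Matrix m n ℝ} {S : Matrix n n ℝ}

theorem mul_mul_gram_eq_self (hS : Xᵀ * X * S * (Xᵀ * X) = Xᵀ * X) : X * S * (Xᵀ * X) = X := by
  set E := X * S * (Xᵀ * X) - X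
  have hXE : Xᵀ * E = 0 := by
    have h : Xᵀ * (X * S * (Xᵀ * X)) = Xᵀ * X := by simpa only [Matrix.mul_assoc] using hS
    rw [Matrix.mul_sub, h, sub_self]
  have hEE : Eᵀ * E = 0 := by
    have : Eᵀ = Xᵀ * X * Sᵀ * Xᵀ - Xᵀ := by
      simp [E, transpose_sub, transpose_mul, Matrix.mul_assoc]
    rw [this, Matrix.sub_mul, Matrix.mul_assoc _ Xᵀ, hXE]
    simp
  rw [← sub_eq_zero]
  rwa [← conjTranspose_eq_transpose_of_trivial, conjTranspose_mul_self_eq_zero] at hEE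

variable (hS : Xᵀ * X * S * (Xᵀ * X) = Xᵀ * X)
include hS

theorem hatMatrix_mul_transpose : hatMatrix X S * (hatMatrix X S)ᵀ = (hatMatrix X S)ᵀ := by
  calc hatMatrix X S * (hatMatrix X S)ᵀ = X * S * (Xᵀ * X) * (Sᵀ * Xᵀ) := by
        simp [hatMatrix, transpose_mul, Matrix.mul_assoc]
    _ = (hatMatrix X S)ᵀ := by
        rw [mul_mul_gram_eq_self hS]; simp [hatMatrix, transpose_mul, Matrix.mul_assoc]

theorem hatMatrix_isSymm : (hatMatrix X S).IsSymm := by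
  have h := hatMatrix_mul_transpose hS
  calc (hatMatrix X S)ᵀ = (hatMatrix X S * (hatMatrix X S)ᵀ)ᵀ := by
        rw [transpose_mul, transpose_transpose, h]
    _ = hatMatrix X S := by rw [h, transpose_transpose]

theorem isIdempotentElem_hatMatrix : IsIdempotentElem (hatMatrix X S) := by
  have h := hatMatrix_mul_transpose hS
  rwa [hatMatrix_isSymm hS] at h

theorem hatMatrix_mul_self : hatMatrix X S * X = X := by
  rw [hatMatrix, Matrix.mul_assoc _ Xᵀ, mul_mul_gram_eq_self hS]

theorem rank_hatMatrix : (hatMatrix X S).rank = X.rank :=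
  le_antisymm ((rank_mul_le_right _ _).trans (rank_transpose X).le)
    (by simpa only [hatMatrix_mul_self hS] using rank_mul_le_left (hatMatrix X S) X)

end HatMatrix

theorem variance_const_add_sum_mul {Ω ι : Type*} [MeasurableSpace Ω] [Fintype ι] [DecidableEq ι]
    {μ : Measure Ω} [IsProbabilityMeasure μ] {ε : ι → Ω → ℝ} {σ : ℝ}
    (hε : ∀ j, MemLp (ε j) 2 μ) (hcov : ∀ j k, cov[ε j, ε k; μ] = if j = k then σ ^ 2 else 0)
    (c : ℝ) (a : ι → ℝ) : Var[fun ω => c + ∑ j, a j * ε j ω; μ] = σ ^ 2 * ∑ j, a j ^ 2 := by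
  have ha : ∀ j, MemLp (fun ω => a j * ε j ω) 2 μ := fun j => (hε j).const_mul (a j)
  rw [variance_const_add (memLp_finsetSum _ fun j _ => ha j).aestronglyMeasurable,
    variance_fun_sum ha]
  simp_rw [covariance_const_mul_left, covariance_const_mul_right, hcov]
  simp only [mul_ite, mul_zero, Finset.sum_ite_eq, Finset.mem_univ, if_true, Finset.mul_sum]
  exact Finset.sum_congr rfl fun j _ => by ring

theorem mulVec_estimator_eq_hatMatrix_mulVec {m n : Type*} [Fintype m] [Fintype n]
    {X : Matrix m n ℝ} {P : Matrix n n ℝ} (hXP : X * P = 0) (S : Matrix n n ℝ)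
    (t : n → ℝ) (y : m → ℝ) : X *ᵥ (P *ᵥ t + (S * Xᵀ) *ᵥ y) = hatMatrix X S *ᵥ y := by
  rw [mulVec_add, mulVec_mulVec, hXP, zero_mulVec, zero_add, mulVec_mulVec, hatMatrix,
    Matrix.mul_assoc]

theorem stmt5_general {Ω : Type*} [MeasurableSpace Ω] (μ : Measure Ω) [IsProbabilityMeasure μ]
    {m N : ℕ} (X : Matrix (Fin m) (Fin N) ℝ)
    (Splus : Matrix (Fin N) (Fin N) ℝ)
    (hS1 : (Xᵀ * X) * Splus * (Xᵀ * X) = Xᵀ * X)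
    (P : Matrix (Fin N) (Fin N) ℝ)
    (hXP : X * P = 0)
    (θstar : Fin N → ℝ) (ε : Ω → Fin m → ℝ) (σ : ℝ)
    (hεL2 : ∀ i, MemLp (fun ω => ε ω i) 2 μ)
    (hεmean : ∀ i, ∫ ω, ε ω i ∂μ = 0)
    (hεcov : ∀ i j, ∫ ω, ε ω i * ε ω j ∂μ = if i = j then σ ^ 2 else 0)
    (θ₀ : Ω → Fin N → ℝ) :
    (∑ i : Fin m,
        variance (fun ω =>
          (X i) ⬝ᵥ (P *ᵥ θ₀ ω + (Splus * Xᵀ) *ᵥ (X *ᵥ θstar + ε ω))) μ) / m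
      = σ ^ 2 * X.rank / m := by
  set H := hatMatrix X Splus
  have hcov : ∀ i j, cov[fun ω => ε ω i, fun ω => ε ω j; μ] = if i = j then σ ^ 2 else 0 :=
    fun i j => by
      rw [covariance_eq_sub (hεL2 i) (hεL2 j), hεmean, zero_mul, sub_zero]
      exact hεcov i j
  have hvar : ∀ i, variance (fun ω =>
      (X i) ⬝ᵥ (P *ᵥ θ₀ ω + (Splus * Xᵀ) *ᵥ (X *ᵥ θstar + ε ω))) μ = σ ^ 2 * H i i := by
    intro i
    have hpred : ∀ ω, (X i) ⬝ᵥ (P *ᵥ θ₀ ω + (Splus * Xᵀ) *ᵥ (X *ᵥ θstar + ε ω))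
        = (H *ᵥ (X *ᵥ θstar)) i + ∑ j, H i j * ε ω j := fun ω => by
      change (X *ᵥ _) i = _
      rw [mulVec_estimator_eq_hatMatrix_mulVec hXP, mulVec_add]
      rfl
    simp_rw [hpred]
    rw [variance_const_add_sum_mul (ε := fun j ω => ε ω j) hεL2 hcov,
      sum_sq_eq_diag_of_isSymm (hatMatrix_isSymm hS1) (isIdempotentElem_hatMatrix hS1)]
  rw [Finset.sum_congr rfl fun i _ => hvar i, ← Finset.mul_sum, show ∑ i, H i i = H.trace from rfl,
    trace_eq_rank_of_isIdempotentElem (isIdempotentElem_hatMatrix hS1), rank_hatMatrix hS1]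

/-- In the over-parameterized setting, the variance averaged over the empirical
distribution of the training inputs equals `σ² rank(X) / m`. -/
theorem stmt5 {Ω : Type*} [MeasurableSpace Ω] (μ : Measure Ω) [IsProbabilityMeasure μ]
    {m N : ℕ} (hN : 0 < N) (hmN : m < N) (X : Matrix (Fin m) (Fin N) ℝ)
    (Splus : Matrix (Fin N) (Fin N) ℝ)
    (hS1 : (Xᵀ * X) * Splus * (Xᵀ * X) = Xᵀ * X)
    (hS2 : Splus * (Xᵀ * X) * Splus = Splus)
    (hS3 : ((Xᵀ * X) * Splus).IsSymm)
    (hS4 : (Splus * (Xᵀ * X)).IsSymm)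
    (P : Matrix (Fin N) (Fin N) ℝ)
    (hPsymm : P.IsSymm) (hPidem : P * P = P)
    (hXP : X * P = 0) (hPnull : ∀ v, X *ᵥ v = 0 → P *ᵥ v = v)
    (θstar : Fin N → ℝ) (ε : Ω → Fin m → ℝ) (σ : ℝ)
    (hεmeas : Measurable ε)
    (hεL2 : ∀ i, MemLp (fun ω => ε ω i) 2 μ)
    (hεmean : ∀ i, ∫ ω, ε ω i ∂μ = 0)
    (hεcov : ∀ i j, ∫ ω, ε ω i * ε ω j ∂μ = if i = j then σ ^ 2 else 0)
    (θ₀ : Ω → Fin N → ℝ) (hθmeas : Measurable θ₀)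
    (hgauss : ∀ i, μ.map (fun ω => θ₀ ω i) = gaussianReal 0 ((N : ℝ≥0))⁻¹)
    (hiid : iIndepFun (fun i ω => θ₀ ω i) μ)
    (hindep : IndepFun θ₀ ε μ) :
    (∑ i : Fin m,
        variance (fun ω =>
          (X i) ⬝ᵥ (P *ᵥ θ₀ ω + (Splus * Xᵀ) *ᵥ (X *ᵥ θstar + ε ω))) μ) / m
      = σ ^ 2 * X.rank / m :=
  stmt5_general μ X Splus hS1 P hXP θstar ε σ hεL2 hεmean hεcov θ₀
end

section
/- If the least-squares loss has a minimizer and gradient descent iterates converge, the limit equals P_⊥(θ₀) + Σ⁺XᵀY, i.e., the minimum-norm least-squares solution plus the untouched null-space component of the initialization. -/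
open Matrix Filter

/-- If the least-squares loss has a minimizer and the gradient-descent iterates
converge, the limit equals `P⊥θ₀ + Σ⁺XᵀY`. -/
theorem stmt18 {m N : ℕ} (hmN : m < N) (X : Matrix (Fin m) (Fin N) ℝ) (Y : Fin m → ℝ)
    (Splus : Matrix (Fin N) (Fin N) ℝ)
    (hS1 : (Xᵀ * X) * Splus * (Xᵀ * X) = Xᵀ * X)
    (hS2 : Splus * (Xᵀ * X) * Splus = Splus)
    (hS3 : ((Xᵀ * X) * Splus).IsSymm)
    (hS4 : (Splus * (Xᵀ * X)).IsSymm)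
    (P : Matrix (Fin N) (Fin N) ℝ)
    (hPsymm : P.IsSymm) (hXP : X * P = 0)
    (hPnull : ∀ v, X *ᵥ v = 0 → P *ᵥ v = v)
    (η : ℝ) (hη : 0 < η)
    (θ : ℕ → Fin N → ℝ)
    (hrec : ∀ t, θ (t + 1) = θ t - η • ((2 : ℝ) • (Xᵀ *ᵥ (X *ᵥ θ t - Y))))
    (hmin : ∃ θmin : Fin N → ℝ, ∀ v : Fin N → ℝ,
      (X *ᵥ θmin - Y) ⬝ᵥ (X *ᵥ θmin - Y) ≤ (X *ᵥ v - Y) ⬝ᵥ (X *ᵥ v - Y))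
    (θlim : Fin N → ℝ) (hconv : Tendsto θ atTop (nhds θlim)) :
    θlim = P *ᵥ θ 0 + (Splus * Xᵀ) *ᵥ Y := by
  have hPXT : P * Xᵀ = 0 := by
    have h := congrArg Matrix.transpose hXP
    rwa [Matrix.transpose_mul, Matrix.transpose_zero, hPsymm.eq] at h
  have hcont : ∀ (A : Matrix (Fin N) (Fin N) ℝ),
      Continuous fun v : Fin N → ℝ => A *ᵥ v := fun A =>
    A.mulVecLin.continuous_of_finiteDimensional
  have hPconst : ∀ t, P *ᵥ θ t = P *ᵥ θ 0 := by
    intro t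
    induction t with
    | zero => rfl
    | succ t ih =>
      rw [hrec t, Matrix.mulVec_sub, Matrix.mulVec_smul, Matrix.mulVec_smul,
        Matrix.mulVec_mulVec, hPXT, Matrix.zero_mulVec, smul_zero, smul_zero,
        sub_zero, ih]
  have hPlim : P *ᵥ θlim = P *ᵥ θ 0 := by
    have h1 : Tendsto (fun t => P *ᵥ θ t) atTop (nhds (P *ᵥ θlim)) :=
      ((hcont P).tendsto θlim).comp hconv
    have h2 : Tendsto (fun t => P *ᵥ θ t) atTop (nhds (P *ᵥ θ 0)) := by
      simp only [hPconst]; exact tendsto_const_nhds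
    exact tendsto_nhds_unique h1 h2
  have hnorm : (Xᵀ * X) *ᵥ θlim = Xᵀ *ᵥ Y := by
    have hdiff : Tendsto (fun t => θ t - θ (t + 1)) atTop (nhds 0) := by
      have := hconv.sub (hconv.comp (tendsto_add_atTop_nat 1))
      simpa using this
    have heq : ∀ t, θ t - θ (t + 1) = (2 * η) • ((Xᵀ * X) *ᵥ θ t - Xᵀ *ᵥ Y) := by
      intro t
      rw [hrec t, smul_smul, ← Matrix.mulVec_mulVec, ← Matrix.mulVec_sub,
        Matrix.mulVec_sub, Matrix.mulVec_mulVec]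
      rw [mul_comm η 2]
      abel
    have hf : Tendsto (fun t => (2 * η) • ((Xᵀ * X) *ᵥ θ t - Xᵀ *ᵥ Y)) atTop
        (nhds ((2 * η) • ((Xᵀ * X) *ᵥ θlim - Xᵀ *ᵥ Y))) :=
      ((((hcont (Xᵀ * X)).tendsto θlim).comp hconv).sub tendsto_const_nhds).const_smul _
    have h0 : (2 * η) • ((Xᵀ * X) *ᵥ θlim - Xᵀ *ᵥ Y) = 0 :=
      tendsto_nhds_unique hf (hdiff.congr heq)
    have h2η : (2 * η) ≠ 0 := by positivity
    rcases smul_eq_zero.mp h0 with h | h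
    · exact absurd h h2η
    · exact sub_eq_zero.mp h
  have key : (Xᵀ * X) *ᵥ ((Splus * Xᵀ) *ᵥ Y) = Xᵀ *ᵥ Y := by
    have h := congrArg (fun M => M *ᵥ θlim) hS1
    simp only [← Matrix.mulVec_mulVec] at h ⊢
    have hnorm' : Xᵀ *ᵥ (X *ᵥ θlim) = Xᵀ *ᵥ Y := by
      rw [← hnorm, ← Matrix.mulVec_mulVec]
    rw [hnorm'] at h
    exact h
  have hXXw : (Xᵀ * X) *ᵥ (θlim - (Splus * Xᵀ) *ᵥ Y) = 0 := by
    rw [Matrix.mulVec_sub, hnorm, key, sub_self]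
  have hXw : X *ᵥ (θlim - (Splus * Xᵀ) *ᵥ Y) = 0 := by
    have h := congr_arg (dotProduct (θlim - (Splus * Xᵀ) *ᵥ Y)) hXXw
    rw [dotProduct_zero, Matrix.dotProduct_mulVec, ← Matrix.vecMul_vecMul,
      Matrix.vecMul_transpose, ← Matrix.dotProduct_mulVec,
      dotProduct_self_eq_zero] at h
    exact h
  have hPw : P *ᵥ (θlim - (Splus * Xᵀ) *ᵥ Y) = θlim - (Splus * Xᵀ) *ᵥ Y :=
    hPnull _ hXw
  have e2 : Splus * (Xᵀ * X) = Xᵀ * X * Splusᵀ := by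
    have h := hS4.eq
    rw [Matrix.transpose_mul, Matrix.transpose_mul, Matrix.transpose_transpose] at h
    rw [← h, Matrix.mul_assoc]
  have hSX : Splus * Xᵀ = Xᵀ * (X * (Splusᵀ * (Splus * Xᵀ))) := by
    have e1 : Splus * Xᵀ = Splus * (Xᵀ * X) * Splus * Xᵀ := by rw [hS2]
    conv_lhs => rw [e1, e2]
    simp only [Matrix.mul_assoc]
  have hPSX : P * (Splus * Xᵀ) = 0 := by
    rw [hSX, ← Matrix.mul_assoc, hPXT, Matrix.zero_mul]
  have hPwe : P *ᵥ (θlim - (Splus * Xᵀ) *ᵥ Y) = P *ᵥ θlim := by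
    rw [Matrix.mulVec_sub, Matrix.mulVec_mulVec, hPSX, Matrix.zero_mulVec, sub_zero]
  have hfin : θlim - (Splus * Xᵀ) *ᵥ Y = P *ᵥ θ 0 := by
    rw [← hPw, hPwe, hPlim]
  rw [sub_eq_iff_eq_add] at hfin
  rw [hfin]
end
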